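/- arXiv:1901.04869 — 6 statements merged into one kernel-verified Lean document; each statement's English description precedes it below -/
import Mathlib

section
/- Let N, n, c be natural numbers with c ≤ n ≤ N and N ≥ 1. If the single-sampling plan (n, c) satisfies the MID acceptance-quality-limit condition for a lot of size N, i.e. for every natural number M with M ≤ N and (M : ℝ)/N ≥ 1/100 one has Pac(M, N, n, c) < 19/20, then N > 100·c. -/
/-- Hypergeometric acceptance probability: probability of finding at most `c`
defective items in a sample of `n` items drawn without replacement from a lot
of `N` items containing `M` defective items. -/
noncomputable def hypPac (M N n c : ℕ) : ℝ :=
  ∑ k ∈ Finset.range (c + 1),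
    ((M.choose k * (N - M).choose (n - k) : ℕ) : ℝ) / (N.choose n : ℝ)

theorem Nat.sum_range_choose_mul_choose_sub {a b n c : ℕ} (hac : a ≤ c) (hcn : c ≤ n) :
    ∑ k ∈ Finset.range (c + 1), a.choose k * b.choose (n - k) = (a + b).choose n := by
  rw [Nat.add_choose_eq, Finset.Nat.sum_antidiagonal_eq_sum_range_succ_mk]
  refine Finset.sum_subset (Finset.range_subset_range.mpr (by omega)) fun k hk hkc => ?_
  simp only [Finset.mem_range] at hk hkc
  rw [Nat.choose_eq_zero_of_lt (by omega), Nat.zero_mul]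

theorem hypPac_eq_one_of_le {M N n c : ℕ} (hMc : M ≤ c) (hcn : c ≤ n) (hnN : n ≤ N) :
    hypPac M N n c = 1 := by
  have hsum := Nat.sum_range_choose_mul_choose_sub (b := N - M) hMc hcn
  rw [Nat.add_sub_cancel' (by omega)] at hsum
  have hpos : (0 : ℝ) < N.choose n := by exact_mod_cast Nat.choose_pos hnN
  rw [hypPac, ← Finset.sum_div, ← Nat.cast_sum, hsum, div_self hpos.ne']

theorem lower_bound_lot_size (N n c : ℕ) (hcn : c ≤ n) (hnN : n ≤ N) (hN : 1 ≤ N)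
    (hMID : ∀ M : ℕ, M ≤ N → (M : ℝ) / N ≥ 1 / 100 → hypPac M N n c < 19 / 20) :
    N > 100 * c := by
  by_contra! hNc
  -- `⌈N/100⌉` defectives make a fraction of at least 1%, yet at most `c` when `N ≤ 100 c`
  set M := ⌈(N : ℝ) / 100⌉₊
  have hNpos : (0 : ℝ) < N := by exact_mod_cast hN
  have hMc : M ≤ c := Nat.ceil_le.mpr (by
    rw [div_le_iff₀ (by norm_num)]; exact_mod_cast (by omega : N ≤ c * 100))
  have hfrac : (M : ℝ) / N ≥ 1 / 100 := by
    rw [ge_iff_le, le_div_iff₀ hNpos]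
    linarith [Nat.le_ceil ((N : ℝ) / 100)]
  have hMN : M ≤ N := by omega
  have hacc := hMID M hMN hfrac
  rw [hypPac_eq_one_of_le hMc hcn hnN] at hacc
  norm_num at hacc
end

section
/- Let n, c be natural numbers with c < n. The binomial operating characteristic p ↦ Pac(p, n, c) is strictly decreasing on the interval [0, 1]: for all real p, q with 0 ≤ p < q ≤ 1, Pac(q, n, c) < Pac(p, n, c). -/
/-- Binomial operating characteristic: acceptance probability of the plan `(n, c)`
at quality level `p`. -/
noncomputable def binPac (p : ℝ) (n c : ℕ) : ℝ :=
  ∑ k ∈ Finset.range (c + 1), (n.choose k : ℝ) * p ^ k * (1 - p) ^ (n - k)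

/-!
`Pac(·, n, c)` is the sum of the first `c + 1` Bernstein polynomials of degree `n`. Since
`b'_{n,ν} = n (b_{n-1,ν-1} - b_{n-1,ν})`, the derivative of this sum telescopes to
`-n b_{n-1,c}`, which is negative on `(0, 1)` as soon as `c ≤ n - 1`.
-/

open Polynomial Finset

theorem derivative_sum_range_bernsteinPolynomial (R : Type*) [CommRing R] (n c : ℕ) :
    derivative (∑ ν ∈ range (c + 1), bernsteinPolynomial R n ν) =
      -(n : R[X]) * bernsteinPolynomial R (n - 1) c := by
  induction c with
  | zero => simp [bernsteinPolynomial.derivative_zero]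
  | succ c ih =>
    rw [sum_range_succ, derivative_add, ih, bernsteinPolynomial.derivative_succ]
    ring

theorem bernsteinPolynomial_eval_pos {n ν : ℕ} (h : ν ≤ n) {x : ℝ} (hx₀ : 0 < x) (hx₁ : x < 1) :
    0 < (bernsteinPolynomial ℝ n ν).eval x := by
  have hchoose : (0 : ℝ) < n.choose ν := by exact_mod_cast Nat.choose_pos h
  have h₁ : 0 < 1 - x := sub_pos.mpr hx₁
  simp only [bernsteinPolynomial, eval_mul, eval_pow, eval_sub, eval_one, eval_X, eval_natCast]
  positivity

theorem binPac_eq_eval_sum_bernsteinPolynomial (p : ℝ) (n c : ℕ) :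
    binPac p n c = (∑ ν ∈ range (c + 1), bernsteinPolynomial ℝ n ν).eval p := by
  simp [binPac, bernsteinPolynomial, eval_finsetSum]

theorem binPac_strictAntiOn {n c : ℕ} (hcn : c < n) :
    StrictAntiOn (fun p => binPac p n c) (Set.Icc 0 1) := by
  simp only [binPac_eq_eval_sum_bernsteinPolynomial]
  refine strictAntiOn_of_deriv_neg (convex_Icc 0 1) (Polynomial.continuousOn _) ?_
  intro x hx
  rw [interior_Icc] at hx
  have hn : (0 : ℝ) < n := by exact_mod_cast (Nat.zero_le c).trans_lt hcn
  have hb := bernsteinPolynomial_eval_pos (Nat.le_sub_one_of_lt hcn) hx.1 hx.2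
  rw [Polynomial.deriv, derivative_sum_range_bernsteinPolynomial]
  simp only [eval_mul, eval_neg, eval_natCast, neg_mul, neg_lt_zero]
  positivity

theorem binPac_strictAnti (n c : ℕ) (hcn : c < n) :
    ∀ p q : ℝ, 0 ≤ p → p < q → q ≤ 1 → binPac q n c < binPac p n c :=
  fun _ _ hp hpq hq =>
    binPac_strictAntiOn hcn ⟨hp, hpq.le.trans hq⟩ ⟨hp.trans hpq.le, hq⟩ hpq
end

section
/- Let N, n, M be natural numbers with N ≥ 1, M ≤ N and n ≤ N. Then the zero-acceptance hypergeometric acceptance probability is bounded above by the binomial one at quality level p = M/N: (C(N−M, n) : ℝ)/C(N, n) ≤ ((N − M : ℝ)/N)^n. (The binomial model is conservative for zero-acceptance sampling: it never underestimates the acceptance probability of a finite lot.) -/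
/-!
Writing `C(K, n) = K (K - 1) ⋯ (K - n + 1) / n!`, the ratio `C(K, n) / C(N, n)` is the product of
the factors `(K - i) / (N - i)` for `i < n`, and each of them is at most `K / N` when `K ≤ N`.
With `K = N - M` this is the theorem.
-/

theorem Nat.descFactorial_mul_pow_le_of_le {K N : ℕ} (hKN : K ≤ N) (n : ℕ) :
    K.descFactorial n * N ^ n ≤ N.descFactorial n * K ^ n := by
  induction n with
  | zero => simp
  | succ n ih =>
    have factor_le : (K - n) * N ≤ (N - n) * K := by
      rw [Nat.sub_mul, Nat.sub_mul, Nat.mul_comm N K]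
      exact Nat.sub_le_sub_left (Nat.mul_le_mul_left n hKN) _
    calc K.descFactorial (n + 1) * N ^ (n + 1)
        = ((K - n) * N) * (K.descFactorial n * N ^ n) := by
          rw [Nat.descFactorial_succ, pow_succ]; ring
      _ ≤ ((N - n) * K) * (N.descFactorial n * K ^ n) := Nat.mul_le_mul factor_le ih
      _ = N.descFactorial (n + 1) * K ^ (n + 1) := by
          rw [Nat.descFactorial_succ, pow_succ]; ring

theorem Nat.choose_mul_pow_le_of_le {K N : ℕ} (hKN : K ≤ N) (n : ℕ) :
    K.choose n * N ^ n ≤ N.choose n * K ^ n := by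
  have h := Nat.descFactorial_mul_pow_le_of_le hKN n
  rw [Nat.descFactorial_eq_factorial_mul_choose, Nat.descFactorial_eq_factorial_mul_choose,
    Nat.mul_assoc, Nat.mul_assoc] at h
  exact Nat.le_of_mul_le_mul_left h n.factorial_pos

theorem Nat.pow_pos_of_choose_pos {N n : ℕ} (h : 0 < N.choose n) : 0 < N ^ n := by
  refine Nat.pow_pos_iff.mpr (N.eq_zero_or_pos.symm.imp_right fun hN => ?_)
  subst hN
  simpa [Nat.choose_eq_zero_iff, pos_iff_ne_zero] using h

theorem choose_div_choose_le_div_pow {K N : ℕ} (hKN : K ≤ N) (n : ℕ) :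
    (K.choose n : ℝ) / N.choose n ≤ ((K : ℝ) / N) ^ n := by
  rcases (N.choose n).eq_zero_or_pos with h | h
  · rw [h, Nat.cast_zero, div_zero]
    positivity
  rw [div_pow, div_le_div_iff₀ (by exact_mod_cast h)
    (by exact_mod_cast Nat.pow_pos_of_choose_pos h), mul_comm _ (N.choose n : ℝ)]
  exact_mod_cast Nat.choose_mul_pow_le_of_le hKN n

theorem binomial_conservative_zero_acceptance_general (N n M : ℕ)
    (hMN : M ≤ N) :
    ((N - M).choose n : ℝ) / (N.choose n : ℝ) ≤ (((N : ℝ) - M) / N) ^ n := by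
  rw [← Nat.cast_sub hMN]
  exact choose_div_choose_le_div_pow (Nat.sub_le N M) n

theorem binomial_conservative_zero_acceptance (N n M : ℕ)
    (hN : 1 ≤ N) (hMN : M ≤ N) (hnN : n ≤ N) :
    ((N - M).choose n : ℝ) / (N.choose n : ℝ) ≤ (((N : ℝ) - M) / N) ^ n :=
  binomial_conservative_zero_acceptance_general N n M hMN
end

section
/- For every pair of natural numbers N, n with 1 ≤ N ≤ 14 and n < N, zero-acceptance sampling of n items from a lot of N items fails the discrete MID limiting-quality condition: the quality level of a lot with a single defective item satisfies (1 : ℝ)/N ≥ 7/100, and its hypergeometric acceptance probability satisfies Pac(1, N, n, 0) = (N − n : ℝ)/N ≥ 1/20. Hence for lot sizes N ≤ 14 only 100% testing (n = N) is admissible under the MID conditions. -/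
theorem hypPac_one_zero_eq_choose_div (N n : ℕ) :
    hypPac 1 N n 0 = ((N - 1).choose n : ℝ) / N.choose n := by
  simp [hypPac]

theorem choose_pred_mul_eq (N n : ℕ) (hnN : n ≤ N) (hN : 0 < N) :
    ((N - 1).choose n : ℝ) * N = ((N : ℝ) - n) * N.choose n := by
  have h := Nat.choose_mul_succ_eq (N - 1) n
  rw [Nat.sub_add_cancel hN] at h
  rw [← Nat.cast_sub hnN, mul_comm ((N - n : ℕ) : ℝ)]
  exact_mod_cast h

theorem hypPac_one_zero (N n : ℕ) (hnN : n ≤ N) (hN : 0 < N) :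
    hypPac 1 N n 0 = ((N : ℝ) - n) / N := by
  have hchoose : (N.choose n : ℝ) ≠ 0 := by exact_mod_cast (Nat.choose_pos hnN).ne'
  have hN' : (N : ℝ) ≠ 0 := by exact_mod_cast hN.ne'
  rw [hypPac_one_zero_eq_choose_div, div_eq_div_iff hchoose hN']
  exact choose_pred_mul_eq N n hnN hN

theorem one_div_le_sub_div (N n : ℕ) (hn : n < N) :
    (1 : ℝ) / N ≤ ((N : ℝ) - n) / N := by
  have h : (n : ℝ) + 1 ≤ N := by exact_mod_cast hn
  gcongr
  linarith

theorem small_lots_require_full_testing_general (N n : ℕ) (hN₂ : N ≤ 14)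
    (hn : n < N) :
    (1 : ℝ) / N ≥ 7 / 100 ∧
      hypPac 1 N n 0 = ((N : ℝ) - n) / N ∧
        ((N : ℝ) - n) / N ≥ 1 / 20 := by
  have hN : 0 < N := by omega
  have hN_le : (1 : ℝ) / 14 ≤ 1 / N := by
    gcongr
    exact_mod_cast hN₂
  refine ⟨by linarith, hypPac_one_zero N n hn.le hN, ?_⟩
  linarith [one_div_le_sub_div N n hn]

theorem small_lots_require_full_testing (N n : ℕ) (hN₁ : 1 ≤ N) (hN₂ : N ≤ 14)
    (hn : n < N) :
    (1 : ℝ) / N ≥ 7 / 100 ∧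
      hypPac 1 N n 0 = ((N : ℝ) - n) / N ∧
        ((N : ℝ) - n) / N ≥ 1 / 20 :=
  small_lots_require_full_testing_general N n hN₂ hn
end

section
/- Under the purely discrete MID criterion, the minimal zero-acceptance sample size for a lot of size N = 43 is n = 22: for every natural number M with M ≤ 43 and (M : ℝ)/43 ≥ 7/100 one has Pac(M, 43, 22, 0) < 1/20, whereas M = 4 satisfies (4 : ℝ)/43 ≥ 7/100 and Pac(4, 43, 21, 0) ≥ 1/20. -/
/-!
With `c = 0` the acceptance probability is `C(N - M, n) / C(N, n)`, which decreases in `M`, so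
the MID condition only has to be checked at the smallest admissible `M`, namely `M = 4`
(`3/43 < 7/100 ≤ 4/43`). There `C(39, 22) / C(43, 22) = 21·20·19·18 / (43·42·41·40) ≈ 0.0485`,
whereas `C(39, 21) / C(43, 21) = 22·21·20·19 / (43·42·41·40) ≈ 0.0593`.
-/

theorem hypPac_zero (M N n : ℕ) :
    hypPac M N n 0 = ((N - M).choose n : ℝ) / N.choose n := by
  simp [hypPac]

theorem hypPac_zero_antitone (N n : ℕ) : Antitone fun M => hypPac M N n 0 := by
  intro M M' hMM'
  simp only [hypPac_zero]
  gcongr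

theorem discrete_minimal_sample_N43 :
    (∀ M : ℕ, M ≤ 43 → (M : ℝ) / 43 ≥ 7 / 100 → hypPac M 43 22 0 < 1 / 20) ∧
      ((4 : ℝ) / 43 ≥ 7 / 100 ∧ hypPac 4 43 21 0 ≥ 1 / 20) := by
  refine ⟨fun M _ hM => ?_, by norm_num, ?_⟩
  · have h4M : 4 ≤ M := by
      rw [ge_iff_le, div_le_div_iff₀ (by norm_num) (by norm_num)] at hM
      exact_mod_cast (by linarith : (3 : ℝ) < M)
    calc hypPac M 43 22 0 ≤ hypPac 4 43 22 0 := hypPac_zero_antitone 43 22 h4M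
      _ < 1 / 20 := by rw [hypPac_zero]; norm_num [Nat.choose]
  · rw [hypPac_zero]
    norm_num [Nat.choose]
end

section
/- Under the gamma-extended hypergeometric criterion, the zero-acceptance sample size n = 41 satisfies the MID limiting-quality condition for lot size N = 3063 but not for lot size N = 3064: G(0.07·3063, 3063, 41) < 1/20 while G(0.07·3064, 3064, 41) ≥ 1/20, where G(M, N, n) = Γ(N−M+1)·Γ(N−n+1)/(Γ(N+1)·Γ(N−M−n+1)). -/
/-!
For `x > 0`, `Γ (x + n) = x (x + 1) ⋯ (x + n - 1) · Γ x`, so both Gamma quotients in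
`G(M, N, n)` collapse to rising products of length `n`, and `G(M, N, n)` is the exact rational
number `∏_{i<n} (N - M - n + 1 + i) / ∏_{i<n} (N - n + 1 + i)`. For `n = 41` and
`M = 0.07 N` the two inequalities are then decided by exact rational arithmetic.
-/

/-- Gamma-extended zero-acceptance hypergeometric probability. -/
noncomputable def gammaPac (M : ℝ) (N n : ℕ) : ℝ :=
  Real.Gamma ((N : ℝ) - M + 1) * Real.Gamma ((N : ℝ) - n + 1) /
    (Real.Gamma ((N : ℝ) + 1) * Real.Gamma ((N : ℝ) - M - n + 1))

lemma Real.Gamma_add_nat_eq_prod_mul {x : ℝ} (hx : 0 < x) (n : ℕ) :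
    Real.Gamma (x + n) = (∏ i ∈ Finset.range n, (x + i)) * Real.Gamma x := by
  induction n with
  | zero => simp
  | succ n ih =>
    rw [Finset.prod_range_succ, Nat.cast_succ, ← add_assoc,
      Real.Gamma_add_one (by positivity), ih]
    ring

lemma gammaPac_eq_prod_div_prod {M : ℝ} {N n : ℕ} (hM : 0 < (N : ℝ) - M - n + 1)
    (hn : 0 < (N : ℝ) - n + 1) :
    gammaPac M N n = (∏ i ∈ Finset.range n, ((N : ℝ) - M - n + 1 + i)) /
      (∏ i ∈ Finset.range n, ((N : ℝ) - n + 1 + i)) := by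
  have hΓM := (Real.Gamma_pos_of_pos hM).ne'
  have hΓn := (Real.Gamma_pos_of_pos hn).ne'
  have hprod : (∏ i ∈ Finset.range n, ((N : ℝ) - n + 1 + i)) ≠ 0 :=
    (Finset.prod_pos fun i _ => by positivity).ne'
  rw [gammaPac, show (N : ℝ) - M + 1 = (N - M - n + 1) + n by ring,
    show (N : ℝ) + 1 = (N - n + 1) + n by ring,
    Real.Gamma_add_nat_eq_prod_mul hM, Real.Gamma_add_nat_eq_prod_mul hn]
  field_simp

theorem gamma_extended_threshold_n41 :
    gammaPac (0.07 * 3063) 3063 41 < 1 / 20 ∧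
      gammaPac (0.07 * 3064) 3064 41 ≥ 1 / 20 := by
  constructor
  · rw [gammaPac_eq_prod_div_prod (by norm_num) (by norm_num), div_lt_iff₀ (by positivity)]
    norm_num [Finset.prod_range_succ]
  · rw [gammaPac_eq_prod_div_prod (by norm_num) (by norm_num), ge_iff_le,
      le_div_iff₀ (by positivity)]
    norm_num [Finset.prod_range_succ]
end
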